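/- Let μ, λ ∈ ℝ. If μλ + μ + λ > 0, then Δ(μ,λ;z) → +∞ as z → 0 from the left; if μλ + μ + λ < 0, then Δ(μ,λ;z) → −∞ as z → 0 from the left; and if μλ + μ + λ = 0, then Δ(μ,λ;z) → 1 + μ as z → 0 from the left (so this limit is negative when μ < −1 and positive when μ > −1). -/

import Mathlib

/-!
For `z ∉ [0, 2]` the partial fractions `cos q / (w + cos q) = 1 - w / (w + cos q)` and
`cos² q / (w + cos q) = cos q - w + w² / (w + cos q)` (with `w = z - 1`) give
`b = (z - 1) a - 1` and `c = (1 - z) + (z - 1)² a`, whence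
`Δ = 1 + λ(z - 1) - μλ - (λ(z - 2) - μλ) · z a(z) - (μλ + μ + λ) a(z)`.
For `z < 0`, rewriting `1 / (w + cos q)` as a multiple of a Poisson kernel gives
`a(z) = -1 / √(z (z - 2))`, so `a(z) → -∞` while `z a(z) → 0` as `z → 0⁻`:
the sign of `μλ + μ + λ` decides the limit, and when it vanishes `Δ → 1 - λ - μλ = 1 + μ`.
-/

open MeasureTheory Real Filter Topology Asymptotics

/-- `a(z) = (1/2π)∫_{−π}^{π} dq/(z − 1 + cos q)`. -/
noncomputable def aF (z : ℝ) : ℝ :=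
  (2 * Real.pi)⁻¹ * ∫ q in (-Real.pi)..Real.pi, (z - 1 + Real.cos q)⁻¹

/-- `b(z) = −(1/2π)∫_{−π}^{π} cos q dq/(z − 1 + cos q)`. -/
noncomputable def bF (z : ℝ) : ℝ :=
  -((2 * Real.pi)⁻¹ * ∫ q in (-Real.pi)..Real.pi, Real.cos q / (z - 1 + Real.cos q))

/-- `c(z) = (1/2π)∫_{−π}^{π} cos² q dq/(z − 1 + cos q)`. -/
noncomputable def cF (z : ℝ) : ℝ :=
  (2 * Real.pi)⁻¹ * ∫ q in (-Real.pi)..Real.pi, (Real.cos q) ^ 2 / (z - 1 + Real.cos q)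

/-- The Fredholm determinant `Δ(μ,λ;z) = (1 − μ a(z))(1 − λ c(z)) − μλ b(z)²`. -/
noncomputable def Δdet (μ lam z : ℝ) : ℝ :=
  (1 - μ * aF z) * (1 - lam * cF z) - μ * lam * (bF z) ^ 2

theorem one_add_mul_cos_pos {β : ℝ} (hβ : |β| < 1) (q : ℝ) : 0 < 1 + β * cos q := by
  have : |β * cos q| < 1 := by
    rw [abs_mul]
    exact (mul_le_of_le_one_right (abs_nonneg β) (abs_cos_le_one q)).trans_lt hβ
  linarith [neg_abs_le (β * cos q)]

theorem one_add_sq_add_two_mul_cos_pos {β : ℝ} (hβ : |β| < 1) (q : ℝ) :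
    0 < 1 + β ^ 2 + 2 * β * cos q := by
  nlinarith [one_add_mul_cos_pos hβ q, sq_nonneg (β * sin q), sin_sq_add_cos_sq q]

theorem hasDerivAt_arctan_sin_div_one_add_cos {β : ℝ} (hβ : |β| < 1) (q : ℝ) :
    HasDerivAt (fun q => arctan (β * sin q / (1 + β * cos q)))
      (β * (β + cos q) / (1 + β ^ 2 + 2 * β * cos q)) q := by
  have hD := one_add_mul_cos_pos hβ q
  have hquot : HasDerivAt (fun q => β * sin q / (1 + β * cos q))
      ((β * cos q * (1 + β * cos q) - β * sin q * (β * -sin q)) / (1 + β * cos q) ^ 2) q :=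
    ((hasDerivAt_sin q).const_mul β).div (((hasDerivAt_cos q).const_mul β).const_add 1) hD.ne'
  have hsq : 1 + (β * sin q / (1 + β * cos q)) ^ 2
      = (1 + β ^ 2 + 2 * β * cos q) / (1 + β * cos q) ^ 2 := by
    field_simp
    linear_combination β ^ 2 * sin_sq_add_cos_sq q
  refine ((hasDerivAt_arctan _).comp q hquot).congr_deriv ?_
  rw [hsq]
  field_simp
  congr 1
  linear_combination β ^ 2 * sin_sq_add_cos_sq q

theorem integral_poisson_kernel {β : ℝ} (hβ : |β| < 1) :
    ∫ q in (-π)..π, (1 - β ^ 2) / (1 + β ^ 2 + 2 * β * cos q) = 2 * π := by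
  -- Unlike the one from the `tan (q / 2)` substitution, this primitive is smooth on all of `ℝ`.
  have hF : ∀ q, HasDerivAt (fun q => q - 2 * arctan (β * sin q / (1 + β * cos q)))
      ((1 - β ^ 2) / (1 + β ^ 2 + 2 * β * cos q)) q := fun q => by
    refine ((hasDerivAt_id q).sub
      ((hasDerivAt_arctan_sin_div_one_add_cos hβ q).const_mul 2)).congr_deriv ?_
    field_simp [(one_add_sq_add_two_mul_cos_pos hβ q).ne']
    ring
  have hcont : Continuous fun q => (1 - β ^ 2) / (1 + β ^ 2 + 2 * β * cos q) :=
    continuous_const.div (by fun_prop) fun q => (one_add_sq_add_two_mul_cos_pos hβ q).ne'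
  rw [intervalIntegral.integral_eq_sub_of_hasDerivAt (fun q _ => hF q)
    (hcont.intervalIntegrable _ _)]
  simp only [sin_pi, sin_neg, neg_zero, mul_zero, zero_div, arctan_zero]
  ring

theorem integral_inv_add_cos {w : ℝ} (hw : w < -1) :
    ∫ q in (-π)..π, (w + cos q)⁻¹ = -(2 * π) / √(w ^ 2 - 1) := by
  have hs2 : √(w ^ 2 - 1) ^ 2 = w ^ 2 - 1 := sq_sqrt (by nlinarith)
  have hs : 0 < √(w ^ 2 - 1) := sqrt_pos.mpr (by nlinarith)
  set s := √(w ^ 2 - 1)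
  -- `β` is the root of `β ^ 2 - 2 w β + 1` in `(-1, 0)`,
  -- so that `1 + β ^ 2 + 2 β cos q = 2 β (w + cos q)`.
  obtain ⟨β, hβ⟩ : ∃ β, β = w + s := ⟨_, rfl⟩
  have hβ0 : β < 0 := by nlinarith
  have hβ1 : |β| < 1 := abs_lt.mpr ⟨by nlinarith, by linarith⟩
  have hnum : 1 - β ^ 2 = -2 * β * s := by rw [hβ]; linear_combination hs2
  have hkernel : ∀ q, (w + cos q)⁻¹ = -s⁻¹ * ((1 - β ^ 2) / (1 + β ^ 2 + 2 * β * cos q)) := by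
    intro q
    have hden : 1 + β ^ 2 + 2 * β * cos q = 2 * β * (w + cos q) := by
      rw [hβ]; linear_combination hs2
    have hwq : w + cos q < 0 := by linarith [cos_le_one q]
    rw [hnum, hden]
    field_simp [hwq.ne, hβ0.ne]
  simp_rw [hkernel, intervalIntegral.integral_const_mul, integral_poisson_kernel hβ1]
  ring

theorem sub_one_add_cos_ne_zero {z : ℝ} (hz : z ∉ Set.Icc 0 2) (q : ℝ) : z - 1 + cos q ≠ 0 := by
  rw [Set.mem_Icc, not_and_or, not_le, not_le] at hz
  rcases hz with hz | hz
  · linarith [cos_le_one q]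
  · linarith [neg_one_le_cos q]

theorem intervalIntegrable_inv_sub_one_add_cos {z : ℝ} (hz : z ∉ Set.Icc 0 2) (a b : ℝ) :
    IntervalIntegrable (fun q => (z - 1 + cos q)⁻¹) volume a b :=
  ((continuous_const.add continuous_cos).inv₀ (sub_one_add_cos_ne_zero hz)).intervalIntegrable a b

theorem bF_eq {z : ℝ} (hz : z ∉ Set.Icc 0 2) : bF z = (z - 1) * aF z - 1 := by
  have h : ∀ q, cos q / (z - 1 + cos q) = 1 - (z - 1) * (z - 1 + cos q)⁻¹ := fun q => by
    field_simp [sub_one_add_cos_ne_zero hz q]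
    ring
  simp_rw [bF, aF, h]
  rw [intervalIntegral.integral_sub intervalIntegrable_const
    ((intervalIntegrable_inv_sub_one_add_cos hz _ _).const_mul _),
    intervalIntegral.integral_const, intervalIntegral.integral_const_mul]
  field_simp [pi_ne_zero]
  ring

theorem cF_eq {z : ℝ} (hz : z ∉ Set.Icc 0 2) : cF z = (1 - z) + (z - 1) ^ 2 * aF z := by
  have h : ∀ q, cos q ^ 2 / (z - 1 + cos q)
      = (cos q - (z - 1)) + (z - 1) ^ 2 * (z - 1 + cos q)⁻¹ := fun q => by
    field_simp [sub_one_add_cos_ne_zero hz q]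
    ring
  simp_rw [cF, aF, h]
  rw [intervalIntegral.integral_add
    ((continuous_cos.intervalIntegrable _ _).sub intervalIntegrable_const)
    ((intervalIntegrable_inv_sub_one_add_cos hz _ _).const_mul _),
    intervalIntegral.integral_sub (continuous_cos.intervalIntegrable _ _) intervalIntegrable_const,
    integral_cos, intervalIntegral.integral_const, intervalIntegral.integral_const_mul]
  simp only [sin_pi, sin_neg, smul_eq_mul]
  field_simp [pi_ne_zero]
  ring

theorem aF_eq {z : ℝ} (hz : z < 0) : aF z = -(√((z - 1) ^ 2 - 1))⁻¹ := by
  rw [aF, integral_inv_add_cos (by linarith)]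
  field_simp [pi_ne_zero]

theorem mul_aF_eq_sqrt {z : ℝ} (hz : z < 0) : z * aF z = √(z / (z - 2)) := by
  have hpos : 0 < (z - 1) ^ 2 - 1 := by nlinarith
  have hq : z / (z - 2) = z ^ 2 / ((z - 1) ^ 2 - 1) := by
    field_simp [(by linarith : z - 2 ≠ 0), hpos.ne']
    ring
  rw [aF_eq hz, hq, sqrt_div (sq_nonneg z), sqrt_sq_eq_abs, abs_of_neg hz]
  field_simp

theorem Δdet_eq (μ lam : ℝ) {z : ℝ} (hz : z ∉ Set.Icc 0 2) :
    Δdet μ lam z = (1 + lam * (z - 1) - μ * lam - (lam * (z - 2) - μ * lam) * (z * aF z))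
      - (μ * lam + μ + lam) * aF z := by
  rw [Δdet, bF_eq hz, cF_eq hz]
  ring

theorem tendsto_aF_nhdsLT_zero : Tendsto aF (𝓝[<] 0) atBot := by
  have hroot : Tendsto (fun z : ℝ => √((z - 1) ^ 2 - 1)) (𝓝[<] 0) (𝓝[>] 0) := by
    refine tendsto_nhdsWithin_iff.mpr ⟨?_, ?_⟩
    · exact ((by fun_prop : Continuous fun z : ℝ => √((z - 1) ^ 2 - 1)).tendsto' 0 0
        (by norm_num)).mono_left nhdsWithin_le_nhds
    · filter_upwards [self_mem_nhdsWithin] with z (hz : z < 0)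
      exact sqrt_pos.mpr (by nlinarith)
  refine (tendsto_neg_atTop_atBot.comp (tendsto_inv_nhdsGT_zero.comp hroot)).congr' ?_
  filter_upwards [self_mem_nhdsWithin] with z hz
  exact (aF_eq hz).symm

theorem tendsto_mul_aF_nhdsLT_zero : Tendsto (fun z => z * aF z) (𝓝[<] 0) (𝓝 0) := by
  have hcont : ContinuousAt (fun z : ℝ => √(z / (z - 2))) 0 :=
    continuous_sqrt.continuousAt.comp
      (continuousAt_id.div (continuousAt_id.sub continuousAt_const) (by norm_num))
  have hlim : Tendsto (fun z : ℝ => √(z / (z - 2))) (𝓝 0) (𝓝 0) := by simpa using hcont.tendsto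
  refine (hlim.mono_left nhdsWithin_le_nhds).congr' ?_
  filter_upwards [self_mem_nhdsWithin] with z hz
  exact (mul_aF_eq_sqrt hz).symm

theorem tendsto_Δdet_add_mul_aF (μ lam : ℝ) :
    Tendsto (fun z => Δdet μ lam z + (μ * lam + μ + lam) * aF z) (𝓝[<] 0)
      (𝓝 (1 - lam - μ * lam)) := by
  have hconst : Tendsto (fun z : ℝ => 1 + lam * (z - 1) - μ * lam) (𝓝[<] 0)
      (𝓝 (1 - lam - μ * lam)) :=
    ((by fun_prop : Continuous fun z : ℝ => 1 + lam * (z - 1) - μ * lam).tendsto' 0 _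
      (by ring)).mono_left nhdsWithin_le_nhds
  have hcoef : Tendsto (fun z : ℝ => lam * (z - 2) - μ * lam) (𝓝[<] 0)
      (𝓝 (-2 * lam - μ * lam)) :=
    ((by fun_prop : Continuous fun z : ℝ => lam * (z - 2) - μ * lam).tendsto' 0 _
      (by ring)).mono_left nhdsWithin_le_nhds
  have hlim := hconst.sub (hcoef.mul tendsto_mul_aF_nhdsLT_zero)
  rw [mul_zero, sub_zero] at hlim
  refine hlim.congr' ?_
  filter_upwards [self_mem_nhdsWithin] with z (hz : z < 0)
  rw [Δdet_eq μ lam (fun h => hz.not_ge h.1)]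
  ring

/-- If `μλ + μ + λ > 0` then `Δ(μ,λ;z) → +∞` as `z → 0⁻`; if `μλ + μ + λ < 0` then
`Δ(μ,λ;z) → −∞` as `z → 0⁻`; and if `μλ + μ + λ = 0` then `Δ(μ,λ;z) → 1 + μ` as
`z → 0⁻` (so this limit is negative when `μ < −1` and positive when `μ > −1`). -/
theorem det_limits_left_of_zero (μ lam : ℝ) :
    (0 < μ * lam + μ + lam → Tendsto (fun z => Δdet μ lam z) (𝓝[<] (0:ℝ)) atTop) ∧
    (μ * lam + μ + lam < 0 → Tendsto (fun z => Δdet μ lam z) (𝓝[<] (0:ℝ)) atBot) ∧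
    (μ * lam + μ + lam = 0 → Tendsto (fun z => Δdet μ lam z) (𝓝[<] (0:ℝ)) (𝓝 (1 + μ))) ∧
    (μ < -1 → 1 + μ < 0) ∧ (-1 < μ → 0 < 1 + μ) := by
  have hlim := tendsto_Δdet_add_mul_aF μ lam
  set κ := μ * lam + μ + lam
  have hsplit : (fun z => Δdet μ lam z) = fun z => (Δdet μ lam z + κ * aF z) + -κ * aF z := by
    funext z
    ring
  refine ⟨fun hκ => ?_, fun hκ => ?_, fun hκ => ?_, fun h => by linarith, fun h => by linarith⟩
  · rw [hsplit]
    exact hlim.add_atTop (tendsto_aF_nhdsLT_zero.const_mul_atBot_of_neg (neg_neg_of_pos hκ))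
  · rw [hsplit]
    exact hlim.add_atBot (tendsto_aF_nhdsLT_zero.const_mul_atBot (neg_pos_of_neg hκ))
  · have h1 : 1 - lam - μ * lam = 1 + μ := by linarith
    simpa [hκ, h1] using hlim
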